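/- For every n ≥ 2, the second power of the path satisfies γᵢ(P_n²) ≥ 3·⌊n/8⌋. -/

import Mathlib

open Finset

open scoped Classical

noncomputable section

namespace IndicatedDom

variable {V : Type*} [Fintype V]

/-- Closed neighborhood `N[v]` as a `Finset`. -/
def cnbhd (G : SimpleGraph V) (v : V) : Finset V :=
  insert v (G.neighborFinset v)

/-- `D` is a dominating set of `G`. -/
def Dominates (G : SimpleGraph V) (D : Finset V) : Prop :=
  ∀ u, ∃ v ∈ D, u ∈ cnbhd G v

/-- The set of vertices not dominated by `D`. -/
def undom (G : SimpleGraph V) (D : Finset V) : Finset V :=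
  univ.filter fun u => ∀ v ∈ D, u ∉ cnbhd G v

/-- Game value of the indicated domination game with a fuel parameter:
given the set `D` of vertices selected so far, Dominator indicates an
undominated vertex `u` (minimizing), Staller selects a vertex of `N[u]`
(maximizing); each selection counts one. -/
def giAux (G : SimpleGraph V) : ℕ → Finset V → ℕ
  | 0, _ => 0
  | (fuel+1), D =>
    if h : (undom G D).Nonempty then
      (undom G D).inf' h fun u =>
        (cnbhd G u).sup' ⟨u, Finset.mem_insert_self u _⟩ fun v => giAux G fuel (insert v D) + 1
    else 0

/-- The indicated domination number `γᵢ(G)`. -/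
def indicatedDomNum (G : SimpleGraph V) : ℕ :=
  giAux G (Fintype.card V) ∅

/-- Game value of the standard domination game with a fuel parameter:
`dom = true` means it is Dominator's turn (minimizing); legal moves are
vertices dominating at least one new vertex. -/
def gameAux (G : SimpleGraph V) : ℕ → Bool → Finset V → ℕ
  | 0, _, _ => 0
  | (fuel+1), dom, D =>
    if h : (univ.filter fun v => ∃ u ∈ cnbhd G v, u ∈ undom G D).Nonempty then
      if dom then
        (univ.filter fun v => ∃ u ∈ cnbhd G v, u ∈ undom G D).inf' h
          fun v => gameAux G fuel false (insert v D) + 1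
      else
        (univ.filter fun v => ∃ u ∈ cnbhd G v, u ∈ undom G D).sup' h
          fun v => gameAux G fuel true (insert v D) + 1
    else 0

/-- The game domination number `γ_g(G)` (Dominator starts). -/
def gameDomNum (G : SimpleGraph V) : ℕ :=
  gameAux G (Fintype.card V) true ∅

/-- A minimal dominating set. -/
def IsMinimalDominating (G : SimpleGraph V) (D : Finset V) : Prop :=
  Dominates G D ∧ ∀ D' ⊂ D, ¬ Dominates G D'

/-- The upper domination number `Γ(G)`. -/
def upperDomNum (G : SimpleGraph V) : ℕ :=
  sSup {k | ∃ D : Finset V, IsMinimalDominating G D ∧ D.card = k}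

/-- A dominating (Grundy) sequence: every vertex dominates something new,
and the whole sequence dominates `G`. -/
def IsDominatingSeq (G : SimpleGraph V) (l : List V) : Prop :=
  (∀ i : Fin l.length, ∃ u, u ∈ cnbhd G (l.get i) ∧
      ∀ j : Fin l.length, (j : ℕ) < (i : ℕ) → u ∉ cnbhd G (l.get j)) ∧
    Dominates G l.toFinset

/-- The Grundy domination number `γ_gr(G)`. -/
def grundyDomNum (G : SimpleGraph V) : ℕ :=
  sSup {k | ∃ l : List V, IsDominatingSeq G l ∧ l.length = k}

/-- The independence number `α(G)`. -/
def indepNum (G : SimpleGraph V) : ℕ :=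
  sSup {k | ∃ S : Finset V, (∀ x ∈ S, ∀ y ∈ S, ¬ G.Adj x y) ∧ S.card = k}

/-- `S` is irredundant: every `x ∈ S` has a private neighbor w.r.t. `S`. -/
def Irredundant (G : SimpleGraph V) (S : Finset V) : Prop :=
  ∀ x ∈ S, ∃ w, (∃ v ∈ S, w ∈ cnbhd G v) ∧ ¬ ∃ v ∈ S.erase x, w ∈ cnbhd G v

/-- The upper irredundance number `IR(G)`. -/
def upperIrredNum (G : SimpleGraph V) : ℕ :=
  sSup {k | ∃ S : Finset V, Irredundant G S ∧ (∀ T, S ⊂ T → ¬ Irredundant G T) ∧ S.card = k}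

/-- The star `K_{1,n}` with center `0`. -/
def starGraph (n : ℕ) : SimpleGraph (Fin (n+1)) where
  Adj a b := a ≠ b ∧ (a = 0 ∨ b = 0)
  symm := by constructor; intro a b h; exact ⟨h.1.symm, h.2.symm⟩
  loopless := by constructor; intro a h; exact h.1 rfl

/-- Two copies of `K_n` with a matching joining corresponding vertices of
index `≥ 1` (i.e. `K_n □ K₂` minus the matching edge at index `0`). -/
def Hgraph (n : ℕ) : SimpleGraph (Fin n × Bool) where
  Adj a b := (a.2 = b.2 ∧ a.1 ≠ b.1) ∨ (a.2 ≠ b.2 ∧ a.1 = b.1 ∧ (a.1 : ℕ) ≠ 0)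
  symm := by
    constructor
    rintro ⟨i, s⟩ ⟨j, t⟩ (⟨h1, h2⟩ | ⟨h1, h2, h3⟩)
    · exact Or.inl ⟨h1.symm, h2.symm⟩
    · exact Or.inr ⟨h1.symm, h2.symm, h2 ▸ h3⟩
  loopless := by constructor; rintro ⟨i, s⟩ (⟨_, h⟩ | ⟨h, _⟩) <;> exact h rfl

/-- The `k`-th power of the path on `n` vertices: `i ~ j` iff `1 ≤ |i-j| ≤ k`. -/
def pathPow (n k : ℕ) : SimpleGraph (Fin n) where
  Adj i j := i ≠ j ∧ (i : ℕ) ≤ (j : ℕ) + k ∧ (j : ℕ) ≤ (i : ℕ) + k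
  symm := by constructor; intro i j h; exact ⟨h.1.symm, h.2.2, h.2.1⟩
  loopless := by constructor; intro i h; exact h.1 rfl

/-- The cycle on `m` vertices (for `m ≥ 3`), modeled on `ZMod m`. -/
def cyc (m : ℕ) : SimpleGraph (ZMod m) where
  Adj i j := i ≠ j ∧ (i + 1 = j ∨ j + 1 = i)
  symm := by constructor; intro i j h; exact ⟨h.1.symm, h.2.symm⟩
  loopless := by constructor; intro i h; exact h.1 rfl

/-- The graph `D₁`: a `9`-cycle `x₁x₂…x₉` plus chords `x₁x₃, x₄x₆, x₇x₉`
(vertex `xᵢ` is represented by `i - 1 : ZMod 9`). -/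
def DGraph : SimpleGraph (ZMod 9) where
  Adj i j := i ≠ j ∧ (i + 1 = j ∨ j + 1 = i ∨
    (i = 0 ∧ j = 2) ∨ (i = 2 ∧ j = 0) ∨ (i = 3 ∧ j = 5) ∨ (i = 5 ∧ j = 3) ∨
    (i = 6 ∧ j = 8) ∨ (i = 8 ∧ j = 6))
  symm := by constructor; intro i j h; refine ⟨h.1.symm, ?_⟩; tauto
  loopless := by constructor; intro i h; exact h.1 rfl

/-!
Cut `P_n²` into the `⌊n/8⌋` full blocks `8k, …, 8k+7` and track the four middle vertices
`8k+2, …, 8k+5` of each. Staller's potential gives a block with `c` undominated tracked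
vertices the value `0, 1, 2, 2, 3` for `c = 0, …, 4`; it is `3⌊n/8⌋` at the start and `0` at
the end. Whatever vertex `u` Dominator indicates, Staller selects a vertex within distance `2`
of `u` in the same block of eight (`u` itself beyond the last full block), hence out of reach
of the tracked vertices of every other block, and chosen so that it dominates at most one new
tracked vertex, or two while a third tracked vertex stays undominated. Either way the
potential drops by at most one per move.
-/

section Game

variable {G : SimpleGraph V}

lemma mem_cnbhd_comm {u v : V} : u ∈ cnbhd G v ↔ v ∈ cnbhd G u := by
  simp only [cnbhd, mem_insert, SimpleGraph.mem_neighborFinset, G.adj_comm, eq_comm]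

lemma mem_undom_insert [DecidableEq V] {D : Finset V} {u v : V} :
    u ∈ undom G (insert v D) ↔ u ∈ undom G D ∧ u ∉ cnbhd G v := by
  simp only [undom, mem_filter, mem_univ, true_and, forall_mem_insert]
  exact and_comm

theorem le_giAux_of_potential [DecidableEq V] (Φ : Finset V → ℕ)
    (h_done : ∀ D, undom G D = ∅ → Φ D = 0)
    (h_reply : ∀ D, ∀ u ∈ undom G D, ∃ v ∈ cnbhd G u, Φ D ≤ Φ (insert v D) + 1)
    (fuel : ℕ) (D : Finset V) (hD : #(undom G D) ≤ fuel) : Φ D ≤ giAux G fuel D := by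
  induction fuel generalizing D with
  | zero => simp [h_done D (card_eq_zero.mp (Nat.le_zero.mp hD))]
  | succ fuel ih =>
    rw [giAux]
    split_ifs with hne
    · refine le_inf' hne _ fun u hu => ?_
      obtain ⟨v, hv, hΦ⟩ := h_reply D u hu
      have hsub : undom G (insert v D) ⊂ undom G D :=
        ssubset_iff_of_subset (fun w hw => (mem_undom_insert.mp hw).1) |>.mpr
          ⟨u, hu, fun hu' => (mem_undom_insert.mp hu').2 (mem_cnbhd_comm.mpr hv)⟩
      have hrec := ih (insert v D) (by have := card_lt_card hsub; omega)
      refine le_sup'_of_le _ hv ?_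
      -- `giAux` inserts with the classical `DecidableEq` instance, `h_reply` with the given one
      convert hΦ.trans (Nat.add_le_add_right hrec 1)
    · simp [h_done D (not_nonempty_iff_eq_empty.mp hne)]

theorem le_indicatedDomNum_of_potential [DecidableEq V] (Φ : Finset V → ℕ)
    (h_done : ∀ D, undom G D = ∅ → Φ D = 0)
    (h_reply : ∀ D, ∀ u ∈ undom G D, ∃ v ∈ cnbhd G u, Φ D ≤ Φ (insert v D) + 1) :
    Φ ∅ ≤ indicatedDomNum G :=
  le_giAux_of_potential Φ h_done h_reply _ _ (card_le_univ _)

end Game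

section Blocks

def blockValue (c : ℕ) : ℕ := if c ≤ 1 then c else if c ≤ 3 then 2 else 3

def blockLoad (a : ℕ → ℕ) (k : ℕ) : ℕ :=
  a (8 * k + 2) + a (8 * k + 3) + a (8 * k + 4) + a (8 * k + 5)

lemma blockValue_le_succ {c c' : ℕ} (h : c ≤ c' + 1 ∨ c ≤ c' + 2 ∧ 1 ≤ c') :
    blockValue c ≤ blockValue c' + 1 := by
  unfold blockValue
  split_ifs <;> omega

/-- Staller's answer to `u` when `a` indicates the undominated positions. At `u ≡ 3 (mod 8)` she
dominates `8k+2, 8k+3` only while one of `8k+4, 8k+5` stays undominated, and otherwise plays `8k+5`,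
whose new tracked vertex can only be `8k+3`; `u ≡ 4` is the mirror image. -/
def blockReply (a : ℕ → ℕ) (u : ℕ) : ℕ :=
  if u % 8 ≤ 2 then 8 * (u / 8)
  else if u % 8 = 3 then
    if a (8 * (u / 8) + 4) + a (8 * (u / 8) + 5) = 0 then u + 2 else u - 2
  else if u % 8 = 4 then
    if a (8 * (u / 8) + 2) + a (8 * (u / 8) + 3) = 0 then u - 2 else u + 2
  else 8 * (u / 8) + 7

lemma blockReply_div (a : ℕ → ℕ) (u : ℕ) : blockReply a u / 8 = u / 8 := by
  unfold blockReply
  split_ifs <;> omega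

lemma blockReply_near (a : ℕ → ℕ) (u : ℕ) :
    u ≤ blockReply a u + 2 ∧ blockReply a u ≤ u + 2 := by
  unfold blockReply
  split_ifs <;> omega

variable {a a' : ℕ → ℕ} {v : ℕ}

lemma blockLoad_eq_of_far (hfar : ∀ x, x + 2 < v ∨ v + 2 < x → a' x = a x) {k : ℕ}
    (hv : v < 8 * k ∨ 8 * k + 8 ≤ v) : blockLoad a' k = blockLoad a k := by
  unfold blockLoad
  rw [hfar _ (by omega), hfar _ (by omega), hfar _ (by omega), hfar _ (by omega)]

lemma blockValue_le_blockReply (ha : ∀ x, a x ≤ 1) (hle : ∀ x, a' x ≤ a x) (u : ℕ)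
    (hfar : ∀ x, x + 2 < blockReply a u ∨ blockReply a u + 2 < x → a' x = a x) :
    blockValue (blockLoad a (u / 8)) ≤ blockValue (blockLoad a' (u / 8)) + 1 := by
  apply blockValue_le_succ
  have h2 := hfar (8 * (u / 8) + 2); have h3 := hfar (8 * (u / 8) + 3)
  have h4 := hfar (8 * (u / 8) + 4); have h5 := hfar (8 * (u / 8) + 5)
  have := ha (8 * (u / 8) + 2); have := ha (8 * (u / 8) + 3)
  have := ha (8 * (u / 8) + 4); have := ha (8 * (u / 8) + 5)
  have := hle (8 * (u / 8) + 2); have := hle (8 * (u / 8) + 3)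
  have := hle (8 * (u / 8) + 4); have := hle (8 * (u / 8) + 5)
  unfold blockReply at h2 h3 h4 h5
  unfold blockLoad
  split_ifs at h2 h3 h4 h5 <;> omega

end Blocks

section PathSquare

variable {n : ℕ}

lemma mem_cnbhd_pathPow_two {a b : Fin n} :
    b ∈ cnbhd (pathPow n 2) a ↔ (a : ℕ) ≤ b + 2 ∧ (b : ℕ) ≤ a + 2 := by
  simp only [cnbhd, mem_insert, SimpleGraph.mem_neighborFinset]
  change b = a ∨ (a ≠ b ∧ _) ↔ _
  rw [ne_eq, Fin.ext_iff, Fin.ext_iff]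
  omega

def undomIndicator (D : Finset (Fin n)) (x : ℕ) : ℕ :=
  if h : x < n then if ⟨x, h⟩ ∈ undom (pathPow n 2) D then 1 else 0 else 0

lemma undomIndicator_le_one (D : Finset (Fin n)) (x : ℕ) : undomIndicator D x ≤ 1 := by
  unfold undomIndicator
  split_ifs <;> omega

lemma undomIndicator_insert_le (D : Finset (Fin n)) (v : Fin n) (x : ℕ) :
    undomIndicator (insert v D) x ≤ undomIndicator D x := by
  by_cases hx : x < n
  · simp only [undomIndicator, dif_pos hx, mem_undom_insert]
    split_ifs <;> simp_all
  · simp only [undomIndicator, dif_neg hx, le_refl]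

lemma undomIndicator_insert_of_far (D : Finset (Fin n)) (v : Fin n) (x : ℕ)
    (hfar : x + 2 < v ∨ (v : ℕ) + 2 < x) :
    undomIndicator (insert v D) x = undomIndicator D x := by
  by_cases hx : x < n
  · have hxv : ⟨x, hx⟩ ∉ cnbhd (pathPow n 2) v := by
      rw [mem_cnbhd_pathPow_two]
      change ¬((v : ℕ) ≤ x + 2 ∧ x ≤ v + 2)
      omega
    simp only [undomIndicator, dif_pos hx, mem_undom_insert, hxv, not_false_eq_true, and_true]
  · simp only [undomIndicator, dif_neg hx]

lemma undomIndicator_empty {x : ℕ} (hx : x < n) :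
    undomIndicator (∅ : Finset (Fin n)) x = 1 := by
  simp [undomIndicator, hx, undom]

lemma undomIndicator_of_undom_eq_empty {D : Finset (Fin n)} (hD : undom (pathPow n 2) D = ∅)
    (x : ℕ) : undomIndicator D x = 0 := by
  simp [undomIndicator, hD]

def blockPotential (n : ℕ) (D : Finset (Fin n)) : ℕ :=
  ∑ k ∈ range (n / 8), blockValue (blockLoad (undomIndicator D) k)

lemma blockPotential_empty : blockPotential n ∅ = 3 * (n / 8) := by
  have hload : ∀ k ∈ range (n / 8),
      blockLoad (undomIndicator (∅ : Finset (Fin n))) k = 4 := by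
    intro k hk
    have := mem_range.mp hk
    unfold blockLoad
    rw [undomIndicator_empty (by omega), undomIndicator_empty (by omega),
      undomIndicator_empty (by omega), undomIndicator_empty (by omega)]
  rw [blockPotential, sum_congr rfl fun k hk => by rw [hload k hk]]
  simp [blockValue, mul_comm]

lemma blockPotential_of_undom_eq_empty {D : Finset (Fin n)} (hD : undom (pathPow n 2) D = ∅) :
    blockPotential n D = 0 := by
  simp [blockPotential, blockLoad, undomIndicator_of_undom_eq_empty hD, blockValue]

lemma blockPotential_le_of_blockwise {D D' : Finset (Fin n)} (k : ℕ)
    (h : ∀ k' < n / 8, blockValue (blockLoad (undomIndicator D) k') ≤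
      blockValue (blockLoad (undomIndicator D') k') + if k' = k then 1 else 0) :
    blockPotential n D ≤ blockPotential n D' + 1 :=
  calc blockPotential n D
      ≤ ∑ k' ∈ range (n / 8), (blockValue (blockLoad (undomIndicator D') k') +
          if k' = k then 1 else 0) := sum_le_sum fun k' hk' => h k' (mem_range.mp hk')
    _ ≤ blockPotential n D' + 1 := by
      rw [sum_add_distrib, sum_ite_eq']
      unfold blockPotential
      split_ifs <;> omega

lemma exists_reply_blockPotential_le (D : Finset (Fin n)) (u : Fin n) :
    ∃ v ∈ cnbhd (pathPow n 2) u, blockPotential n D ≤ blockPotential n (insert v D) + 1 := by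
  by_cases htail : 8 * (n / 8) ≤ u
  · refine ⟨u, mem_cnbhd_pathPow_two.mpr (by omega),
      blockPotential_le_of_blockwise 0 fun k hk => ?_⟩
    rw [blockLoad_eq_of_far (undomIndicator_insert_of_far D u) (by omega)]
    omega
  · have hdiv := blockReply_div (undomIndicator D) u
    have hnear := blockReply_near (undomIndicator D) u
    obtain ⟨v, hv⟩ : ∃ v : Fin n, (v : ℕ) = blockReply (undomIndicator D) u :=
      ⟨⟨blockReply (undomIndicator D) u, by omega⟩, rfl⟩
    refine ⟨v, mem_cnbhd_pathPow_two.mpr (by omega),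
      blockPotential_le_of_blockwise (u / 8) fun k hk => ?_⟩
    split_ifs with hku
    · subst hku
      exact blockValue_le_blockReply (undomIndicator_le_one D) (undomIndicator_insert_le D v) u
        fun x hx => undomIndicator_insert_of_far D v x (hv ▸ hx)
    · rw [blockLoad_eq_of_far (undomIndicator_insert_of_far D v) (by omega)]
      omega

end PathSquare

theorem stmt14_general (n : ℕ) :
    3 * (n / 8) ≤ indicatedDomNum (pathPow n 2) :=
  blockPotential_empty (n := n) ▸
    le_indicatedDomNum_of_potential (blockPotential n) (fun _ => blockPotential_of_undom_eq_empty)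
      (fun D u _ => exists_reply_blockPotential_le D u)

/-- `γᵢ(P_n²) ≥ 3 ⋅ ⌊n/8⌋` for every `n ≥ 2`. -/
theorem stmt14 (n : ℕ) (hn : 2 ≤ n) :
    3 * (n / 8) ≤ indicatedDomNum (pathPow n 2) :=
  stmt14_general n

end IndicatedDom
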